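/- arXiv:1611.04207 — 3 statements merged into one kernel-verified Lean document; each statement's English description precedes it below -/
import Mathlib

section
/- Let E be a real Banach space, Ω ⊆ E an open set, f : E → E a map that is Fréchet differentiable on Ω with derivative f', and x* ∈ Ω with f(x*) = 0, such that f' is continuous (in operator norm) at x* and f'(x*) is invertible. Then the Newton iteration map N(x) := x − f'(x)⁻¹ (f x), defined on the ball where f'(x) is invertible, satisfies lim_{x → x*} ‖N(x) − x*‖ / ‖x − x*‖ = 0; precisely: for every ε > 0 there exists δ > 0 such that B_δ(x*) ⊆ Ω, f'(x) is invertible for all x ∈ B_δ(x*), and ‖N(x) − x*‖ ≤ ε ‖x − x*‖ for all x ∈ B_δ(x*). -/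
/-!
Near `x*` the Newton error is `N x - x* = -f'(x)⁻¹ (f x - f x* - f'(x) (x - x*))`. The bracket is
`o(x - x*)`: the derivative at `x*` linearises `f` to that order, and replacing `f'(x*)` by `f'(x)`
costs `‖f'(x) - f'(x*)‖ ‖x - x*‖`, which is `o(x - x*)` by continuity of `f'`. Invertible operators
form an open set on which inversion is continuous, so `f'(x)⁻¹` exists and stays bounded near `x*`,
and a bounded operator applied to an `o(x - x*)` vector is still `o(x - x*)`.
-/

open Filter Topology Asymptotics

namespace Asymptotics

variable {α 𝕜 E F G : Type*} [NontriviallyNormedField 𝕜]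
  [NormedAddCommGroup E] [NormedSpace 𝕜 E] [NormedAddCommGroup F] [NormedSpace 𝕜 F]
  [NormedAddCommGroup G] {l : Filter α} {A : α → E →L[𝕜] F} {v : α → E} {g : α → G}

theorem IsLittleO.clm_apply_isBigO (hA : A =o[l] fun _ => (1 : ℝ)) (hv : v =O[l] g) :
    (fun x => A x (v x)) =o[l] g := by
  refine isBoundedBilinearMap_apply.isBigO_comp.trans_isLittleO ?_
  simpa only [one_mul, isLittleO_norm_right] using hA.norm_left.mul_isBigO hv.norm_norm

theorem IsBigO.clm_apply_isLittleO (hA : A =O[l] fun _ => (1 : ℝ)) (hv : v =o[l] g) :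
    (fun x => A x (v x)) =o[l] g := by
  refine isBoundedBilinearMap_apply.isBigO_comp.trans_isLittleO ?_
  simpa only [one_mul, isLittleO_norm_right] using hA.norm_left.mul_isLittleO hv.norm_norm

end Asymptotics

section Newton

variable {𝕜 E F : Type*} [NontriviallyNormedField 𝕜]
  [NormedAddCommGroup E] [NormedSpace 𝕜 E] [NormedAddCommGroup F] [NormedSpace 𝕜 F]
  {f : E → F} {f' : E → E →L[𝕜] F} {x₀ : E}

theorem ContinuousAt.eventually_exists_equiv [CompleteSpace E] (hf' : ContinuousAt f' x₀)
    (hinv : ∃ e : E ≃L[𝕜] F, (e : E →L[𝕜] F) = f' x₀) :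
    ∀ᶠ x in 𝓝 x₀, ∃ e : E ≃L[𝕜] F, (e : E →L[𝕜] F) = f' x := by
  obtain ⟨e, he⟩ := hinv
  exact hf'.eventually_mem (he ▸ ContinuousLinearEquiv.nhds e)

theorem HasFDerivAt.isLittleO_of_continuousAt (hf : HasFDerivAt f (f' x₀) x₀)
    (hf' : ContinuousAt f' x₀) :
    (fun x => f x - f x₀ - f' x (x - x₀)) =o[𝓝 x₀] fun x => x - x₀ := by
  have hvar : (fun x => (f' x - f' x₀) (x - x₀)) =o[𝓝 x₀] fun x => x - x₀ :=
    ((isLittleO_one_iff ℝ).2 (tendsto_sub_nhds_zero_iff.2 hf')).clm_apply_isBigO (isBigO_refl _ _)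
  refine (hf.isLittleO.sub hvar).congr_left fun x => ?_
  simp only [sub_apply]
  abel

theorem isLittleO_newton_error [CompleteSpace E] (hf : HasFDerivAt f (f' x₀) x₀)
    (hf' : ContinuousAt f' x₀) (hx₀ : f x₀ = 0)
    (hinv : ∃ e : E ≃L[𝕜] F, (e : E →L[𝕜] F) = f' x₀) :
    (fun x => x - (f' x).inverse (f x) - x₀) =o[𝓝 x₀] fun x => x - x₀ := by
  have hequiv := hf'.eventually_exists_equiv hinv
  obtain ⟨e, he⟩ := hinv
  have hbounded : (fun x => (f' x).inverse) =O[𝓝 x₀] fun _ => (1 : ℝ) := by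
    have hcont := (contDiffAt_map_inverse (n := 0) e).continuousAt
    rw [he] at hcont
    exact (hcont.comp hf').tendsto.isBigO_one ℝ
  refine (hbounded.clm_apply_isLittleO (hf.isLittleO_of_continuousAt hf')).neg_left.congr'
    ?_ EventuallyEq.rfl
  filter_upwards [hequiv] with x ⟨ex, hex⟩
  rw [← hex, ContinuousLinearMap.inverse_equiv, hx₀]
  simp only [sub_zero, ContinuousLinearEquiv.coe_coe, map_sub,
    ContinuousLinearEquiv.symm_apply_apply]
  abel

end Newton

/-- Normed-space form of Lemma 4: the Newton iteration map
`N x = x - (f' x)⁻¹ (f x)` satisfies `‖N x - x*‖ / ‖x - x*‖ → 0` as `x → x*`. -/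
theorem newton_map_superlinear
    {E : Type*} [NormedAddCommGroup E] [NormedSpace ℝ E] [CompleteSpace E]
    {Ω : Set E} (hΩ : IsOpen Ω) (f : E → E) (f' : E → (E →L[ℝ] E))
    (hdiff : ∀ x ∈ Ω, HasFDerivAt f (f' x) x)
    {xstar : E} (hx : xstar ∈ Ω) (hsol : f xstar = 0)
    (hcont : ContinuousAt f' xstar)
    (hinv : ∃ e : E ≃L[ℝ] E, (e : E →L[ℝ] E) = f' xstar) :
    ∀ ε > 0, ∃ δ > 0, Metric.ball xstar δ ⊆ Ω ∧
      (∀ x ∈ Metric.ball xstar δ, ∃ e : E ≃L[ℝ] E, (e : E →L[ℝ] E) = f' x) ∧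
      ∀ x ∈ Metric.ball xstar δ,
        ‖(x - (f' x).inverse (f x)) - xstar‖ ≤ ε * ‖x - xstar‖ := by
  intro ε hε
  have hsmall := (isLittleO_newton_error (hdiff xstar hx) hcont hsol hinv).def hε
  obtain ⟨δ, hδ, hball⟩ := Metric.eventually_nhds_iff_ball.1
    ((hΩ.eventually_mem hx).and ((hcont.eventually_exists_equiv hinv).and hsmall))
  exact ⟨δ, hδ, fun x hx => (hball x hx).1, fun x hx => (hball x hx).2.1,
    fun x hx => (hball x hx).2.2⟩
end

section
/- Let E be a real Banach space, Ω ⊆ E an open set, f : E → E Fréchet differentiable on Ω with derivative f', and x* ∈ Ω with f(x*) = 0, such that f' is continuous (in operator norm) at x* and f'(x*) is invertible. Then there exists δ > 0 such that B_δ(x*) ⊆ Ω, f'(x) is invertible for every x ∈ B_δ(x*), and the Newton iteration map N(x) := x − f'(x)⁻¹ (f x) satisfies ‖N(x) − x*‖ ≤ (1/2) ‖x − x*‖ for every x ∈ B_δ(x*); in particular N maps B_δ(x*) into itself. -/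
/-!
Near `x*` the derivative stays invertible with `‖f'(x)⁻¹‖ ≤ C := ‖f'(x*)⁻¹‖ + 1` (openness of the
invertible operators and continuity of inversion there), and `‖f'(y) - f'(x*)‖ ≤ 1 / (4C)`.
Since `f x* = 0`, the Newton error is `N x - x* = f'(x)⁻¹ (f'(x) (x - x*) - (f x - f x*))`, and the
mean value inequality bounds the linearization error by `2 · 1 / (4C) · ‖x - x*‖`, giving the
factor `C · 2 / (4C) = 1/2`.
-/

open Filter Metric Topology ContinuousLinearMap

noncomputable def newtonMap {𝕜 E : Type*} [NontriviallyNormedField 𝕜] [NormedAddCommGroup E]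
    [NormedSpace 𝕜 E] (f : E → E) (f' : E → E →L[𝕜] E) (x : E) : E :=
  x - (f' x).inverse (f x)

section

variable {𝕜 E F : Type*} [NontriviallyNormedField 𝕜] [NormedAddCommGroup E] [NormedSpace 𝕜 E]
  [NormedAddCommGroup F] [NormedSpace 𝕜 F]

theorem ContinuousLinearMap.IsInvertible.norm_sub_inverse_apply_sub_le {A : E →L[𝕜] F}
    (hA : A.IsInvertible) (x z : E) (y : F) :
    ‖x - A.inverse y - z‖ ≤ ‖A.inverse‖ * ‖A (x - z) - y‖ := by
  obtain ⟨e, rfl⟩ := hA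
  rw [inverse_equiv]
  have hsplit : x - (e.symm : F →L[𝕜] E) y - z = (e.symm : F →L[𝕜] E) (e (x - z) - y) := by
    simp [sub_right_comm]
  rw [hsplit]
  exact le_opNorm _ _

end

section

variable {E F : Type*} [NormedAddCommGroup E] [NormedSpace ℝ E] [NormedAddCommGroup F]
  [NormedSpace ℝ F] {f : E → F} {f' : E → E →L[ℝ] F} {s : Set E} {L : E →L[ℝ] F} {ε : ℝ}

theorem Convex.norm_image_sub_sub_apply_le (hs : Convex ℝ s)
    (hf : ∀ y ∈ s, HasFDerivWithinAt f (f' y) s y) (hbound : ∀ y ∈ s, ‖f' y - L‖ ≤ ε)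
    {x z : E} (hx : x ∈ s) (hz : z ∈ s) :
    ‖f x - f z - f' x (x - z)‖ ≤ 2 * ε * ‖x - z‖ := by
  have hmean : ‖f x - f z - L (x - z)‖ ≤ ε * ‖x - z‖ :=
    hs.norm_image_sub_le_of_norm_hasFDerivWithin_le' hf hbound hz hx
  have hderiv : ‖(f' x - L) (x - z)‖ ≤ ε * ‖x - z‖ :=
    (le_opNorm _ _).trans (by gcongr; exact hbound x hx)
  calc ‖f x - f z - f' x (x - z)‖ = ‖(f x - f z - L (x - z)) - (f' x - L) (x - z)‖ := by
        rw [sub_apply]; abel_nf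
    _ ≤ ε * ‖x - z‖ + ε * ‖x - z‖ := (norm_sub_le _ _).trans (add_le_add hmean hderiv)
    _ = 2 * ε * ‖x - z‖ := by ring

end

section

variable {E : Type*} [NormedAddCommGroup E] [NormedSpace ℝ E] {f : E → E} {f' : E → E →L[ℝ] E}
  {s : Set E} {xstar : E} {ε : ℝ}

theorem Convex.norm_newtonMap_sub_le (hs : Convex ℝ s)
    (hf : ∀ y ∈ s, HasFDerivWithinAt f (f' y) s y) (hbound : ∀ y ∈ s, ‖f' y - f' xstar‖ ≤ ε)
    (hxstar : xstar ∈ s) (hsol : f xstar = 0) {x : E} (hx : x ∈ s) (hinv : (f' x).IsInvertible) :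
    ‖newtonMap f f' x - xstar‖ ≤ ‖(f' x).inverse‖ * (2 * ε * ‖x - xstar‖) := by
  have hlin := hs.norm_image_sub_sub_apply_le hf hbound hx hxstar
  rw [hsol, sub_zero, ← norm_neg, neg_sub] at hlin
  exact (hinv.norm_sub_inverse_apply_sub_le x xstar (f x)).trans (by gcongr)

end

/-- Contraction estimate for the Newton iteration map: there is a ball around `x*` on which
`f'` is invertible and `‖N x - x*‖ ≤ (1/2) ‖x - x*‖`, where `N x = x - (f' x)⁻¹ (f x)`;
in particular `N` maps the ball into itself. -/
theorem newton_map_contraction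
    {E : Type*} [NormedAddCommGroup E] [NormedSpace ℝ E] [CompleteSpace E]
    {Ω : Set E} (hΩ : IsOpen Ω) (f : E → E) (f' : E → (E →L[ℝ] E))
    (hdiff : ∀ x ∈ Ω, HasFDerivAt f (f' x) x)
    {xstar : E} (hx : xstar ∈ Ω) (hsol : f xstar = 0)
    (hcont : ContinuousAt f' xstar)
    (hinv : ∃ e : E ≃L[ℝ] E, (e : E →L[ℝ] E) = f' xstar) :
    ∃ δ > 0, Metric.ball xstar δ ⊆ Ω ∧
      (∀ x ∈ Metric.ball xstar δ, ∃ e : E ≃L[ℝ] E, (e : E →L[ℝ] E) = f' x) ∧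
      (∀ x ∈ Metric.ball xstar δ,
        ‖(x - (f' x).inverse (f x)) - xstar‖ ≤ (1 / 2) * ‖x - xstar‖) ∧
      ∀ x ∈ Metric.ball xstar δ,
        (x - (f' x).inverse (f x)) ∈ Metric.ball xstar δ := by
  set C := ‖(f' xstar).inverse‖ + 1
  have hC : 0 < C := by positivity
  have hinvertible : ∀ᶠ x in 𝓝 xstar, (f' x).IsInvertible := by
    obtain ⟨e, he⟩ := hinv
    exact hcont.eventually_mem (he ▸ ContinuousLinearEquiv.nhds e)
  have hinverse : ∀ᶠ x in 𝓝 xstar, ‖(f' x).inverse‖ ≤ C := by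
    have hcontinv : ContinuousAt (fun x => (f' x).inverse) xstar :=
      (IsInvertible.contDiffAt_map_inverse (n := 0) hinv).continuousAt.comp hcont
    exact hcontinv.norm.eventually (ge_mem_nhds (lt_add_one _))
  have hderiv : ∀ᶠ x in 𝓝 xstar, ‖f' x - f' xstar‖ ≤ 1 / (4 * C) :=
    (tendsto_iff_norm_sub_tendsto_zero.1 hcont).eventually (ge_mem_nhds (by positivity))
  have hdomain : ∀ᶠ x in 𝓝 xstar, x ∈ Ω := hΩ.mem_nhds hx
  obtain ⟨δ, hδ, hball⟩ := eventually_nhds_iff_ball.1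
    (hdomain.and (hinvertible.and (hinverse.and hderiv)))
  have hcontract (x) (hxδ : x ∈ ball xstar δ) : ‖newtonMap f f' x - xstar‖ ≤ 1 / 2 * ‖x - xstar‖ :=
    calc ‖newtonMap f f' x - xstar‖ ≤ C * (2 * (1 / (4 * C)) * ‖x - xstar‖) := by
          refine ((convex_ball xstar δ).norm_newtonMap_sub_le
            (fun y hy => (hdiff y (hball y hy).1).hasFDerivWithinAt) (fun y hy => (hball y hy).2.2.2)
            (mem_ball_self hδ) hsol hxδ (hball x hxδ).2.1).trans ?_
          gcongr
          exact (hball x hxδ).2.2.1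
      _ = 1 / 2 * ‖x - xstar‖ := by field_simp; ring
  refine ⟨δ, hδ, fun x hxδ => (hball x hxδ).1, fun x hxδ => (hball x hxδ).2.1, hcontract,
    fun x hxδ => ?_⟩
  have hNx : ‖x - (f' x).inverse (f x) - xstar‖ ≤ 1 / 2 * ‖x - xstar‖ := hcontract x hxδ
  rw [mem_ball, dist_eq_norm] at hxδ ⊢
  linarith [norm_nonneg (x - xstar)]
end

section
/- Let E be a real Banach space, Ω ⊆ E an open set, f : E → E Fréchet differentiable on Ω with derivative f', and x* ∈ Ω with f(x*) = 0, such that f' is continuous (in operator norm) at x* and f'(x*) is invertible. Then there exists δ > 0 with B_δ(x*) ⊆ Ω such that: (i) f'(x) is invertible for every x ∈ B_δ(x*); and (ii) every sequence (x_k) with x_0 ∈ B_δ(x*) satisfying the Newton recursion x_{k+1} = x_k − f'(x_k)⁻¹ (f x_k) for all k remains in B_δ(x*), converges to x*, and converges superlinearly, i.e., for every ε > 0 there exists K such that ‖x_{k+1} − x*‖ ≤ ε ‖x_k − x*‖ for all k ≥ K. -/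
/-!
Write `N y = y - f'(y)⁻¹ f(y)`. Wherever `f'(y)` is invertible,
`N y - x* = f'(y)⁻¹ ((f'(y) - f'(x*)) (y - x*) - (f y - f x* - f'(x*) (y - x*)))`.
Invertibility is an open condition and inversion is continuous, so `f'(y)⁻¹` stays bounded near
`x*`, while both terms in the bracket are `o(y - x*)`, by continuity of `f'` and differentiability
at `x*`. Hence `N y - x* = o(y - x*)`: on a small ball `N` halves the distance to `x*`, so the
ball is invariant and the iterates converge, and along converging iterates the ratio
`‖x_{k+1} - x*‖ / ‖x_k - x*‖` tends to `0`.
-/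

open Filter Topology Asymptotics Metric

section OperatorAsymptotics

variable {α 𝕜 E F : Type*} [NontriviallyNormedField 𝕜] [NormedAddCommGroup E]
  [NormedSpace 𝕜 E] [NormedAddCommGroup F] [NormedSpace 𝕜 F] {l : Filter α}
  {T : α → E →L[𝕜] F} {g : α → E}

theorem isBigO_clm_apply_of_isBigO_one (hT : T =O[l] fun _ => (1 : ℝ)) :
    (fun a => T a (g a)) =O[l] g := by
  simpa using isBoundedBilinearMap_apply.isBigO_comp.trans
    (hT.norm_left.mul (isBigO_refl g l).norm_norm)

theorem isLittleO_clm_apply_of_tendsto_zero (hT : Tendsto T l (𝓝 0)) :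
    (fun a => T a (g a)) =o[l] g := by
  simpa using isBoundedBilinearMap_apply.isBigO_comp.trans_isLittleO
    (((isLittleO_one_iff ℝ).2 hT).norm_left.mul_isBigO (isBigO_refl g l).norm_norm)

theorem ContinuousAt.eventually_isInvertible [CompleteSpace E] {X : Type*} [TopologicalSpace X]
    {A : X → E →L[𝕜] F} {x : X} (hA : ContinuousAt A x) (hx : (A x).IsInvertible) :
    ∀ᶠ y in 𝓝 x, (A y).IsInvertible := by
  obtain ⟨e, he⟩ := hx
  exact hA (he ▸ ContinuousLinearEquiv.nhds e)

end OperatorAsymptotics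

section Newton

variable {𝕜 E : Type*} [NontriviallyNormedField 𝕜] [NormedAddCommGroup E] [NormedSpace 𝕜 E]

/-- `ContinuousLinearMap.inverse` is `0` off the invertible maps, where the step is `y ↦ y`. -/
noncomputable def newtonStep (f : E → E) (f' : E → E →L[𝕜] E) (y : E) : E :=
  y - (f' y).inverse (f y)

theorem newtonStep_sub_eq {f : E → E} {f' : E → E →L[𝕜] E} {x y : E} (hx : f x = 0)
    (hy : (f' y).IsInvertible) :
    newtonStep f f' y - x =
      (f' y).inverse ((f' y - f' x) (y - x) - (f y - f x - f' x (y - x))) := by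
  have : (f' y - f' x) (y - x) - (f y - f x - f' x (y - x)) = f' y (y - x) - f y := by
    simp only [sub_apply, hx]
    abel
  rw [this, map_sub, hy.inverse_apply_self, newtonStep]
  abel

theorem newtonStep_sub_isLittleO [CompleteSpace E] {f : E → E} {f' : E → E →L[𝕜] E} {x : E}
    (hderiv : HasFDerivAt f (f' x) x) (hx : f x = 0) (hcont : ContinuousAt f' x)
    (hinv : (f' x).IsInvertible) :
    (fun y => newtonStep f f' y - x) =o[𝓝 x] fun y => y - x := by
  have hbounded : (fun y => (f' y).inverse) =O[𝓝 x] fun _ => (1 : ℝ) :=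
    ((hinv.contDiffAt_map_inverse (n := 0)).continuousAt.comp hcont).isBigO_one ℝ
  have hresidual : (fun y => (f' y - f' x) (y - x) - (f y - f x - f' x (y - x)))
      =o[𝓝 x] fun y => y - x :=
    (isLittleO_clm_apply_of_tendsto_zero (tendsto_sub_nhds_zero_iff.2 hcont)).sub
      hderiv.isLittleO
  refine ((isBigO_clm_apply_of_isBigO_one hbounded).trans_isLittleO hresidual).congr' ?_
    EventuallyEq.rfl
  filter_upwards [hcont.eventually_isInvertible hinv] with y hy
  exact (newtonStep_sub_eq hx hy).symm

end Newton

section Contraction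

variable {E : Type*} [SeminormedAddCommGroup E] {N : E → E} {x : ℕ → E} {p : E} {c δ : ℝ}

theorem mem_ball_of_norm_sub_le_mul (hN : ∀ y ∈ ball p δ, ‖N y - p‖ ≤ c * ‖y - p‖)
    (hc : c ≤ 1) (hx₀ : x 0 ∈ ball p δ) (hx : ∀ k, x (k + 1) = N (x k)) (k : ℕ) :
    x k ∈ ball p δ := by
  induction k with
  | zero => exact hx₀
  | succ k ih =>
    rw [mem_ball_iff_norm] at ih ⊢
    calc ‖x (k + 1) - p‖ ≤ c * ‖x k - p‖ := hx k ▸ hN _ (mem_ball_iff_norm.2 ih)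
      _ ≤ ‖x k - p‖ := mul_le_of_le_one_left (norm_nonneg _) hc
      _ < δ := ih

theorem tendsto_of_norm_sub_le_mul (hN : ∀ y ∈ ball p δ, ‖N y - p‖ ≤ c * ‖y - p‖)
    (hc₀ : 0 ≤ c) (hc : c < 1) (hx₀ : x 0 ∈ ball p δ) (hx : ∀ k, x (k + 1) = N (x k)) :
    Tendsto x atTop (𝓝 p) := by
  have hgeom (k : ℕ) : ‖x k - p‖ ≤ c ^ k * ‖x 0 - p‖ :=
    le_geom (u := fun k => ‖x k - p‖) hc₀ k fun j _ =>
      hx j ▸ hN _ (mem_ball_of_norm_sub_le_mul hN hc.le hx₀ hx j)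
  rw [tendsto_iff_norm_sub_tendsto_zero]
  refine squeeze_zero (fun _ => norm_nonneg _) hgeom ?_
  simpa using (tendsto_pow_atTop_nhds_zero_of_lt_one hc₀ hc).mul_const ‖x 0 - p‖

theorem eventually_norm_sub_le_of_isLittleO (hN : (fun y => N y - p) =o[𝓝 p] fun y => y - p)
    (hxp : Tendsto x atTop (𝓝 p)) (hx : ∀ k, x (k + 1) = N (x k)) {ε : ℝ} (hε : 0 < ε) :
    ∀ᶠ k in atTop, ‖x (k + 1) - p‖ ≤ ε * ‖x k - p‖ := by
  simpa only [hx, Function.comp_apply] using (hN.comp_tendsto hxp).bound hε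

end Contraction

/-- Main theorem (normed-space form): under mere invertibility of the derivative at the
solution, the Newton sequence starting in a suitable ball is well defined, stays in the ball,
and converges superlinearly to the solution. -/
theorem newton_superlinear_convergence
    {E : Type*} [NormedAddCommGroup E] [NormedSpace ℝ E] [CompleteSpace E]
    {Ω : Set E} (hΩ : IsOpen Ω) (f : E → E) (f' : E → (E →L[ℝ] E))
    (hdiff : ∀ x ∈ Ω, HasFDerivAt f (f' x) x)
    {xstar : E} (hx : xstar ∈ Ω) (hsol : f xstar = 0)
    (hcont : ContinuousAt f' xstar)
    (hinv : ∃ e : E ≃L[ℝ] E, (e : E →L[ℝ] E) = f' xstar) :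
    ∃ δ > 0, Metric.ball xstar δ ⊆ Ω ∧
      (∀ x ∈ Metric.ball xstar δ, ∃ e : E ≃L[ℝ] E, (e : E →L[ℝ] E) = f' x) ∧
      ∀ x : ℕ → E, x 0 ∈ Metric.ball xstar δ →
        (∀ k : ℕ, x (k + 1) = x k - (f' (x k)).inverse (f (x k))) →
        (∀ k : ℕ, x k ∈ Metric.ball xstar δ) ∧
        Tendsto x atTop (𝓝 xstar) ∧
        ∀ ε > 0, ∃ K : ℕ, ∀ k ≥ K, ‖x (k + 1) - xstar‖ ≤ ε * ‖x k - xstar‖ := by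
  have hsuper := newtonStep_sub_isLittleO (hdiff xstar hx) hsol hcont hinv
  obtain ⟨δ, hδ, hball⟩ := eventually_nhds_iff_ball.mp ((hΩ.eventually_mem hx).and
    ((hcont.eventually_isInvertible hinv).and (hsuper.bound (by norm_num : (0 : ℝ) < 1 / 2))))
  refine ⟨δ, hδ, fun y hy => (hball y hy).1, fun y hy => (hball y hy).2.1, fun x hx₀ hrec => ?_⟩
  have hhalf : ∀ y ∈ ball xstar δ, ‖newtonStep f f' y - xstar‖ ≤ 1 / 2 * ‖y - xstar‖ :=
    fun y hy => (hball y hy).2.2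
  have hlim := tendsto_of_norm_sub_le_mul hhalf (by norm_num) (by norm_num) hx₀ hrec
  refine ⟨mem_ball_of_norm_sub_le_mul hhalf (by norm_num) hx₀ hrec, hlim, fun ε hε => ?_⟩
  exact eventually_atTop.mp (eventually_norm_sub_le_of_isLittleO hsuper hlim hrec hε)
end
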